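/- The determinant of the (ℓ+1)×(ℓ+1) coefficient matrix whose columns are (θ_k(x_1), …, θ_k(x_ℓ), θ_k(z)) for k = 0,1,…,ℓ, where θ_0 = Σ ∂/∂x_i, θ_1 = Σ x_i ∂/∂x_i + z ∂/∂z, and θ_k = Σ_{s=2}^{k} (∏_{a∈N_k}(x_1−x_s−az) ∏_{t=k+1}^{ℓ}(x_s−x_t)) ∂/∂x_s for k ≥ 2, equals a nonzero constant multiple of Q = z · ∏_{k=2}^{ℓ}∏_{a∈N_k}(x_1−x_k−az) · ∏_{2≤k<t≤ℓ}(x_k−x_t). -/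
import Mathlib


open MvPolynomial

noncomputable section

variable {K : Type*} [Field K] [CharZero K]

/-- θ₀ = ∑ ∂/∂xᵢ -/
def theta0 (K : Type*) [Field K] (n : ℕ) :
    Derivation K (MvPolynomial (Option (Fin (n + 1))) K)
      (MvPolynomial (Option (Fin (n + 1))) K) :=
  mkDerivation K (fun o => Option.elim o 0 (fun _ => 1))

/-- The Euler derivation θ₁ = ∑ xᵢ ∂/∂xᵢ + z ∂/∂z. -/
def thetaE (K : Type*) [Field K] (n : ℕ) :
    Derivation K (MvPolynomial (Option (Fin (n + 1))) K)
      (MvPolynomial (Option (Fin (n + 1))) K) :=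
  mkDerivation K (fun o => X o)

/-- The coefficient of `∂/∂x_{s+2}` in θ_{j+2}. -/
def ishCoef (n : ℕ) (N : Fin n → Finset K) (j s : Fin n) :
    MvPolynomial (Option (Fin (n + 1))) K :=
  if s ≤ j then
    (∏ a ∈ N j, (X (some 0) - X (some s.succ) - C a * X none)) *
      ∏ t ∈ Finset.univ.filter (fun t => j < t), (X (some s.succ) - X (some t.succ))
  else 0

/-- θ_{j+2} = ∑_{s=2}^{j+2} (∏_{a∈N_{j+2}}(x₁-x_s-az) ∏_{t=j+3}^{ℓ}(x_s-x_t)) ∂/∂x_s. -/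
def thetak (n : ℕ) (N : Fin n → Finset K) (j : Fin n) :
    Derivation K (MvPolynomial (Option (Fin (n + 1))) K)
      (MvPolynomial (Option (Fin (n + 1))) K) :=
  mkDerivation K (fun o =>
    Option.elim o 0 (fun i => if h : i = 0 then 0 else ishCoef n N j (i.pred h)))

/-- The family θ₀, θ₁, θ₂, …, θ_ℓ (here ℓ = n+1). -/
def thetaFam (n : ℕ) (N : Fin n → Finset K) (i : Fin (n + 2)) :
    Derivation K (MvPolynomial (Option (Fin (n + 1))) K)
      (MvPolynomial (Option (Fin (n + 1))) K) :=
  if _h0 : i.val = 0 then theta0 K n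
  else if _h1 : i.val = 1 then thetaE K n
  else thetak n N ⟨i.val - 2, by have := i.isLt; omega⟩

/-- The Saito matrix determinant: the determinant of the (ℓ+1)×(ℓ+1) matrix whose
columns are the coefficients (θ_k(x₁), …, θ_k(x_ℓ), θ_k(z)) of θ₀, θ₁, …, θ_ℓ equals
a nonzero constant multiple of
Q = z ∏_{k=2}^{ℓ} ∏_{a∈N_k}(x₁-x_k-az) ∏_{2≤k<t≤ℓ}(x_k-x_t).
Here ℓ = n+1; rows are indexed via the equivalence `Fin (n+2) ≃ Option (Fin (n+1))`. -/
theorem ish_det (K : Type*) [Field K] [CharZero K] (n : ℕ) (N : Fin n → Finset K) :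
    ∃ c : K, c ≠ 0 ∧
      (Matrix.of fun (r k : Fin (n + 2)) =>
          thetaFam n N k (X ((_root_.finSuccEquiv (n + 1)) r))).det =
        C c *
          (X none *
            (∏ j : Fin n, ∏ a ∈ N j,
              (X (some 0) - X (some j.succ) - C a * X none)) *
            ∏ j : Fin n, ∏ t ∈ Finset.univ.filter (fun t => j < t),
              (X (some j.succ) - X (some t.succ))) := by
  refine ⟨-1, by norm_num, ?_⟩
  set M : Matrix (Fin (n+2)) (Fin (n+2)) (MvPolynomial (Option (Fin (n+1))) K) :=
    Matrix.of fun (r k : Fin (n + 2)) =>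
      thetaFam n N k (X ((_root_.finSuccEquiv (n + 1)) r)) with hM
  -- row 0
  have hrow0 : ∀ k : Fin (n+2), M 0 k = if k = (1 : Fin (n+2)) then X none else 0 := by
    intro k
    have : M 0 k = thetaFam n N k (X none) := by
      simp [hM, finSuccEquiv_zero]
    rw [this]
    rcases eq_or_ne k 1 with rfl | hk
    · simp [thetaFam, thetaE, mkDerivation_X]
    · rw [if_neg hk]
      unfold thetaFam
      split_ifs with h0 h1
      · simp [theta0, mkDerivation_X]
      · exact absurd (Fin.ext h1) hk
      · simp [thetak, mkDerivation_X]
  rw [Matrix.det_succ_row_zero]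
  rw [Finset.sum_eq_single_of_mem (1 : Fin (n+2)) (Finset.mem_univ _)
    (by intro b _ hb; rw [hrow0, if_neg hb]; ring)]
  rw [hrow0, if_pos rfl]
  set M1 := M.submatrix Fin.succ (Fin.succAbove 1) with hM1
  have hrow1 : ∀ c : Fin (n+1), M1 0 c = if c = 0 then 1 else 0 := by
    intro c
    rcases eq_or_ne c 0 with rfl | hc
    · have : M1 0 0 = thetaFam n N 0 (X (some 0)) := by
        simp [hM1, hM, Fin.one_succAbove_zero, finSuccEquiv_succ, Fin.succ_zero_eq_one]
        congr 1
      rw [this]; simp [thetaFam, theta0, mkDerivation_X]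
    · obtain ⟨j, rfl⟩ := Fin.exists_succ_eq.mpr hc
      rw [if_neg hc]
      have h1 : M1 0 j.succ = thetaFam n N j.succ.succ (X (some 0)) := by
        have := Fin.succ_succAbove_succ (0 : Fin (n+1)) j
        have hfe : (_root_.finSuccEquiv (n+1)) (1 : Fin (n+2)) = some 0 := by
          rw [← Fin.succ_zero_eq_one, finSuccEquiv_succ]
        simp [hM1, hM, this, hfe]
      rw [h1]
      unfold thetaFam
      split_ifs with h0 h1'
      · simp [Fin.val_succ] at h0
      · simp [Fin.val_succ] at h1'
      · simp [thetak, mkDerivation_X]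
  rw [Matrix.det_succ_row_zero]
  rw [Finset.sum_eq_single_of_mem (0 : Fin (n+1)) (Finset.mem_univ _)
    (by intro b _ hb; rw [hrow1, if_neg hb]; ring)]
  rw [hrow1, if_pos rfl]
  set M2 := M1.submatrix Fin.succ (Fin.succAbove 0) with hM2
  have hM2' : ∀ s j : Fin n, M2 s j = ishCoef n N j s := by
    intro s j
    have hcol : (1 : Fin (n+2)).succAbove j.succ = j.succ.succ := by
      have := Fin.succ_succAbove_succ (0 : Fin (n+1)) j
      simpa [Fin.succ_zero_eq_one] using this
    have h1 : M2 s j = thetaFam n N j.succ.succ (X (some s.succ)) := by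
      simp [hM2, hM1, hM, hcol, finSuccEquiv_succ]
    rw [h1]
    unfold thetaFam
    split_ifs with h0 h1'
    · simp [Fin.val_succ] at h0
    · simp [Fin.val_succ] at h1'
    · have hj : (⟨(j.succ.succ : Fin (n+2)).val - 2, by omega⟩ : Fin n) = j := by
        ext; simp [Fin.val_succ]
      rw [hj]
      simp [thetak, mkDerivation_X, Fin.succ_ne_zero, Fin.pred_succ]
  have htri : M2.BlockTriangular id := by
    intro i j hij
    rw [hM2' i j, ishCoef, if_neg (by exact fun h => absurd hij (not_lt.mpr h))]
  rw [Matrix.det_of_upperTriangular htri]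
  have hdiag : ∀ i : Fin n, M2 i i =
      (∏ a ∈ N i, (X (some 0) - X (some i.succ) - C a * X none)) *
        ∏ t ∈ Finset.univ.filter (fun t => i < t), (X (some i.succ) - X (some t.succ)) := by
    intro i; rw [hM2', ishCoef, if_pos le_rfl]
  rw [Finset.prod_congr rfl (fun i _ => hdiag i), Finset.prod_mul_distrib]
  have h1v : ((1 : Fin (n+2)) : ℕ) = 1 := rfl
  have h0v : ((0 : Fin (n+1)) : ℕ) = 0 := rfl
  rw [h1v, h0v, map_neg, map_one]
  ring

end
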